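/- Let X ⊆ ℝ be open, d ≥ 0, and f : X → ℝ. If f is (ρ_<^{(d)}→ρ_<^{(d)})-continuous, i.e., there exists a continuous function F defined on the set of all ρ_<^{(d)}-names of points of X such that for every x ∈ X and every ρ_<^{(d)}-name p of x, F(p) is a ρ_<^{(d)}-name of f(x), then f is monotonically nondecreasing: x ≤ y implies f(x) ≤ f(y) for all x, y ∈ X. -/
import Mathlib


open Filter Topology

/- The name spaces `ℕ → ℚ` etc. carry the product topology with `ℚ` discrete. -/
local instance : TopologicalSpace ℚ := ⊥

/-- Alternating suprema/infima in `EReal`; `true` starts with a supremum.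
`AltSupInf k b q` has `k+1` alternating sup/inf levels. -/
noncomputable def AltSupInf : ℕ → Bool → (ℕ → EReal) → EReal
  | 0, b, q => if b then ⨆ n, q n else ⨅ n, q n
  | k+1, b, q =>
      if b then ⨆ n, AltSupInf k false (fun m => q (Nat.pair n m))
      else ⨅ n, AltSupInf k true (fun m => q (Nat.pair n m))

/-- ρ_<^{(k)}-name of a real: `x = sup inf sup ⋯` (`k+1` alternating sup/inf,
starting with sup, taken in ℝ ∪ {±∞}). -/
noncomputable def IsRhoLtKName (k : ℕ) (q : ℕ → ℚ) (x : ℝ) : Prop :=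
  (x : EReal) = AltSupInf k true (fun n => ((q n : ℝ) : EReal))

namespace Stmt11Aux

open scoped Classical

local instance : DiscreteTopology ℚ := ⟨rfl⟩

/-! ### Alternating first-order statements -/

def AltStmt : ℕ → Bool → (List ℕ → Prop) → Prop
  | 0, true, χ => ∃ n, χ [n]
  | 0, false, χ => ∀ n, χ [n]
  | k+1, true, χ => ∃ n, AltStmt k false (fun l => χ (n :: l))
  | k+1, false, χ => ∀ n, AltStmt k true (fun l => χ (n :: l))

theorem altStmt_congr : ∀ (k : ℕ) (b : Bool) {χ χ' : List ℕ → Prop},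
    (∀ l, χ l ↔ χ' l) → (AltStmt k b χ ↔ AltStmt k b χ')
  | 0, true, χ, χ', h => exists_congr fun n => h [n]
  | 0, false, χ, χ', h => forall_congr' fun n => h [n]
  | k+1, true, χ, χ', h => exists_congr fun n => altStmt_congr k false fun l => h (n :: l)
  | k+1, false, χ, χ', h => forall_congr' fun n => altStmt_congr k true fun l => h (n :: l)

theorem altStmt_const_and : ∀ (k : ℕ) (b : Bool) (p : Prop) (χ : List ℕ → Prop),
    AltStmt k b (fun l => p ∧ χ l) ↔ (p ∧ AltStmt k b χ)
  | 0, true, p, χ => by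
      constructor
      · rintro ⟨n, hp, hχ⟩; exact ⟨hp, n, hχ⟩
      · rintro ⟨hp, n, hχ⟩; exact ⟨n, hp, hχ⟩
  | 0, false, p, χ => by
      constructor
      · intro h; exact ⟨(h 0).1, fun n => (h n).2⟩
      · rintro ⟨hp, h⟩ n; exact ⟨hp, h n⟩
  | k+1, true, p, χ => by
      show (∃ n, AltStmt k false fun l => p ∧ χ (n :: l)) ↔ _
      constructor
      · rintro ⟨n, h⟩
        rw [altStmt_const_and k false p] at h
        exact ⟨h.1, n, h.2⟩
      · rintro ⟨hp, n, h⟩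
        exact ⟨n, (altStmt_const_and k false p _).mpr ⟨hp, h⟩⟩
  | k+1, false, p, χ => by
      show (∀ n, AltStmt k true fun l => p ∧ χ (n :: l)) ↔ _
      constructor
      · intro h
        refine ⟨((altStmt_const_and k true p _).mp (h 0)).1, fun n => ?_⟩
        exact ((altStmt_const_and k true p _).mp (h n)).2
      · rintro ⟨hp, h⟩ n
        exact (altStmt_const_and k true p _).mpr ⟨hp, h n⟩

theorem altStmt_const_imp : ∀ (k : ℕ) (b : Bool) (p : Prop) (χ : List ℕ → Prop),
    AltStmt k b (fun l => p → χ l) ↔ (p → AltStmt k b χ)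
  | 0, true, p, χ => by
      constructor
      · rintro ⟨n, h⟩ hp; exact ⟨n, h hp⟩
      · intro h
        by_cases hp : p
        · obtain ⟨n, hn⟩ := h hp; exact ⟨n, fun _ => hn⟩
        · exact ⟨0, fun hpp => absurd hpp hp⟩
  | 0, false, p, χ => by
      constructor
      · intro h hp n; exact h n hp
      · intro h n hp; exact h hp n
  | k+1, true, p, χ => by
      show (∃ n, AltStmt k false fun l => p → χ (n :: l)) ↔ _
      constructor
      · rintro ⟨n, h⟩ hp
        exact ⟨n, (altStmt_const_imp k false p _).mp h hp⟩
      · intro h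
        by_cases hp : p
        · obtain ⟨n, hn⟩ := h hp
          exact ⟨n, (altStmt_const_imp k false p _).mpr fun _ => hn⟩
        · exact ⟨0, (altStmt_const_imp k false p _).mpr fun hpp => absurd hpp hp⟩
  | k+1, false, p, χ => by
      show (∀ n, AltStmt k true fun l => p → χ (n :: l)) ↔ _
      constructor
      · intro h hp n
        exact (altStmt_const_imp k true p _).mp (h n) hp
      · intro h n
        exact (altStmt_const_imp k true p _).mpr fun hp => h hp n

theorem merge_exists (k : ℕ) (χ : ℕ → List ℕ → Prop) :
    (∃ n, AltStmt k true (χ n)) ↔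
      AltStmt k true (fun l => χ (Nat.unpair l.headI).1 ((Nat.unpair l.headI).2 :: l.tail)) := by
  cases k with
  | zero =>
      show (∃ n m, χ n [m]) ↔ ∃ j, χ (Nat.unpair j).1 [(Nat.unpair j).2]
      constructor
      · rintro ⟨n, m, h⟩
        refine ⟨Nat.pair n m, ?_⟩
        simpa [Nat.unpair_pair] using h
      · rintro ⟨j, h⟩; exact ⟨(Nat.unpair j).1, (Nat.unpair j).2, h⟩
  | succ k =>
      show (∃ n m, AltStmt k false fun l => χ n (m :: l)) ↔
        (∃ j, AltStmt k false fun l => χ (Nat.unpair j).1 ((Nat.unpair j).2 :: l))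
      constructor
      · rintro ⟨n, m, h⟩
        refine ⟨Nat.pair n m, ?_⟩
        refine (altStmt_congr k false fun l => ?_).mp h
        rw [Nat.unpair_pair]
      · rintro ⟨j, h⟩
        exact ⟨(Nat.unpair j).1, (Nat.unpair j).2, h⟩

theorem merge_forall (k : ℕ) (χ : ℕ → List ℕ → Prop) :
    (∀ n, AltStmt k false (χ n)) ↔
      AltStmt k false (fun l => χ (Nat.unpair l.headI).1 ((Nat.unpair l.headI).2 :: l.tail)) := by
  cases k with
  | zero =>
      show (∀ n m, χ n [m]) ↔ ∀ j, χ (Nat.unpair j).1 [(Nat.unpair j).2]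
      constructor
      · intro h j; exact h _ _
      · intro h n m
        have := h (Nat.pair n m)
        simpa [Nat.unpair_pair] using this
  | succ k =>
      show (∀ n m, AltStmt k true fun l => χ n (m :: l)) ↔
        (∀ j, AltStmt k true fun l => χ (Nat.unpair j).1 ((Nat.unpair j).2 :: l))
      constructor
      · intro h j; exact h _ _
      · intro h n m
        have := h (Nat.pair n m)
        refine (altStmt_congr k true fun l => ?_).mp this
        rw [Nat.unpair_pair]

/-! ### Paths and encodings -/

def decL : ℕ → ℕ → List ℕ
  | 0, n => [n]
  | k+1, n => (Nat.unpair n).1 :: decL k (Nat.unpair n).2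

theorem decL_pair (k n m : ℕ) : decL (k+1) (Nat.pair n m) = n :: decL k m := by
  simp [decL, Nat.unpair_pair]

def encL : List ℕ → ℕ
  | [] => 0
  | [a] => a
  | a :: b :: l => Nat.pair a (encL (b :: l))

theorem decL_encL : ∀ (k : ℕ) (l : List ℕ), l.length = k + 1 → decL k (encL l) = l := by
  intro k
  induction k with
  | zero =>
      intro l hl
      match l, hl with
      | [a], _ => rfl
  | succ k ih =>
      intro l hl
      match l, hl with
      | a :: b :: t, hl =>
          have h1 : encL (a :: b :: t) = Nat.pair a (encL (b :: t)) := rfl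
          rw [h1, decL_pair]
          have h2 : (b :: t).length = k + 1 := by
            simpa using Nat.succ_injective (by simpa using hl)
          rw [ih (b :: t) h2]

/-! ### EReal helpers -/

theorem ereal_lt_iInf_iff (q : ℕ → EReal) (c : ℚ) :
    ((c : ℝ) : EReal) < (⨅ n, q n) ↔
      ∃ c' : ℚ, (c : ℝ) < (c' : ℝ) ∧ ∀ n, ((c' : ℝ) : EReal) ≤ q n := by
  constructor
  · intro h
    obtain ⟨c', h1, h2⟩ := EReal.exists_rat_btwn_of_lt h
    exact ⟨c', by exact_mod_cast h1, fun n => le_of_lt (lt_of_lt_of_le h2 (iInf_le _ n))⟩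
  · rintro ⟨c', h1, h2⟩
    exact lt_of_lt_of_le (by exact_mod_cast h1) (le_iInf h2)

theorem ereal_le_iSup_iff (q : ℕ → EReal) (c : ℚ) :
    ((c : ℝ) : EReal) ≤ (⨆ n, q n) ↔
      ∀ c'' : ℚ, (c'' : ℝ) < (c : ℝ) → ∃ n, ((c'' : ℝ) : EReal) < q n := by
  constructor
  · intro h c'' hlt
    exact lt_iSup_iff.mp (lt_of_lt_of_le (by exact_mod_cast hlt) h)
  · intro h
    by_contra hc
    rw [not_le] at hc
    obtain ⟨c'', h1, h2⟩ := EReal.exists_rat_btwn_of_lt hc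
    obtain ⟨n, hn⟩ := h c'' (by exact_mod_cast h2)
    exact lt_irrefl _ (((le_iSup q n).trans_lt h1).trans hn)

theorem iSup_ite' {U W : EReal} (hUW : U ≤ W) (p : ℕ → Prop) :
    (⨆ n, if p n then W else U) = if ∃ n, p n then W else U := by
  by_cases h : ∃ n, p n
  · rw [if_pos h]
    obtain ⟨n, hn⟩ := h
    apply le_antisymm
    · exact iSup_le fun m => by by_cases hm : p m <;> simp [hm, hUW]
    · have h2 := le_iSup (fun n => if p n then W else U) n
      rwa [if_pos hn] at h2
  · rw [if_neg h]
    push_neg at h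
    have h2 : (fun n => if p n then W else U) = fun _ => U := funext fun n => if_neg (h n)
    rw [h2, iSup_const]

theorem iInf_ite' {U W : EReal} (hUW : U ≤ W) (p : ℕ → Prop) :
    (⨅ n, if p n then W else U) = if ∀ n, p n then W else U := by
  by_cases h : ∀ n, p n
  · rw [if_pos h]
    have h2 : (fun n => if p n then W else U) = fun _ => W := funext fun n => if_pos (h n)
    rw [h2, iInf_const]
  · rw [if_neg h]
    push_neg at h
    obtain ⟨n, hn⟩ := h
    apply le_antisymm
    · have h2 := iInf_le (fun n => if p n then W else U) n
      rwa [if_neg hn] at h2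
    · exact le_iInf fun m => by by_cases hm : p m <;> simp [hm, hUW]

theorem altSupInf_twoval {U W : EReal} (hUW : U ≤ W) :
    ∀ (k : ℕ) (b : Bool) (θ : List ℕ → Prop),
      AltSupInf k b (fun pos => if θ (decL k pos) then W else U)
        = if AltStmt k b θ then W else U := by
  intro k
  induction k with
  | zero =>
      intro b θ
      cases b
      · show (⨅ n, if θ [n] then W else U) = if (∀ n, θ [n]) then W else U
        exact iInf_ite' hUW _
      · show (⨆ n, if θ [n] then W else U) = if (∃ n, θ [n]) then W else U
        exact iSup_ite' hUW _
  | succ k ih =>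
      intro b θ
      cases b
      · show (⨅ n, AltSupInf k true fun m => if θ (decL (k+1) (Nat.pair n m)) then W else U)
            = if (∀ n, AltStmt k true fun l => θ (n :: l)) then W else U
        have h1 : ∀ n, (AltSupInf k true fun m => if θ (decL (k+1) (Nat.pair n m)) then W else U)
            = if AltStmt k true (fun l => θ (n :: l)) then W else U := by
          intro n
          have h2 : (fun m => if θ (decL (k+1) (Nat.pair n m)) then W else U)
              = fun m => if (fun l => θ (n :: l)) (decL k m) then W else U := by
            funext m; rw [decL_pair]
          rw [h2]; exact ih true (fun l => θ (n :: l))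
        rw [iInf_congr h1, iInf_ite' hUW]
      · show (⨆ n, AltSupInf k false fun m => if θ (decL (k+1) (Nat.pair n m)) then W else U)
            = if (∃ n, AltStmt k false fun l => θ (n :: l)) then W else U
        have h1 : ∀ n, (AltSupInf k false fun m => if θ (decL (k+1) (Nat.pair n m)) then W else U)
            = if AltStmt k false (fun l => θ (n :: l)) then W else U := by
          intro n
          have h2 : (fun m => if θ (decL (k+1) (Nat.pair n m)) then W else U)
              = fun m => if (fun l => θ (n :: l)) (decL k m) then W else U := by
            funext m; rw [decL_pair]
          rw [h2]; exact ih false (fun l => θ (n :: l))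
        rw [iSup_congr h1, iSup_ite' hUW]

end Stmt11Aux
namespace Stmt11Aux

open scoped Classical

/-! ### Canonical rationals below x resp. y -/

noncomputable def uu (x : ℝ) (a : ℕ) : ℚ :=
  (exists_rat_btwn (show x - 1/(a+1) < x from sub_lt_self x (by positivity))).choose

theorem uu_spec (x : ℝ) (a : ℕ) : x - 1/(a+1) < (uu x a : ℝ) ∧ ((uu x a : ℝ)) < x :=
  (exists_rat_btwn (show x - 1/(a+1) < x from sub_lt_self x (by positivity))).choose_spec

noncomputable def ww (x y : ℝ) (a : ℕ) : ℚ :=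
  if h : x < y then
    (exists_rat_btwn (show max (y - 1/(a+1)) x < y from
      max_lt (sub_lt_self y (by positivity)) h)).choose
  else 0

theorem ww_spec (x y : ℝ) (a : ℕ) (h : x < y) :
    max (y - 1/(a+1)) x < (ww x y a : ℝ) ∧ ((ww x y a : ℝ)) < y := by
  have hlt : max (y - 1/(a+1)) x < y := max_lt (sub_lt_self y (by positivity)) h
  rw [ww, dif_pos h]
  exact (exists_rat_btwn hlt).choose_spec

theorem ereal_le_of_forall_sub (z : ℝ) (b : EReal)
    (h : ∀ j : ℕ, ((z - 1/(j+1) : ℝ) : EReal) ≤ b) : (z : EReal) ≤ b := by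
  induction b with
  | bot =>
      exfalso
      have h0 := h 0
      rw [le_bot_iff] at h0
      exact EReal.coe_ne_bot _ h0
  | coe r =>
      rw [EReal.coe_le_coe_iff]
      have h' : ∀ j : ℕ, z - 1/(j+1) ≤ r := fun j => EReal.coe_le_coe_iff.mp (h j)
      by_contra hzr
      push_neg at hzr
      obtain ⟨n, hn⟩ := exists_nat_one_div_lt (sub_pos.mpr hzr)
      have h2 := h' n
      have h3 : (1:ℝ)/(n+1) < z - r := hn
      linarith
  | top => exact le_top

/-- Value of the top level of a family whose branch `n` is constantly
`ww x y n` (if `Θ ((unpair n).1)`) or `uu x n`. -/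
theorem top_sup {x y : ℝ} (hxy : x < y) (Θ : ℕ → Prop) (v : ℕ → EReal)
    (hv : ∀ n, v n = if Θ (Nat.unpair n).1 then ((ww x y n : ℝ) : EReal)
      else ((uu x n : ℝ) : EReal)) :
    (⨆ n, v n) = if ∃ m, Θ m then (y : EReal) else (x : EReal) := by
  by_cases h : ∃ m, Θ m
  · rw [if_pos h]
    obtain ⟨m₀, hm₀⟩ := h
    apply le_antisymm
    · refine iSup_le fun n => ?_
      rw [hv n]
      split
      · exact le_of_lt (by exact_mod_cast (ww_spec x y n hxy).2)
      · have h1 : (uu x n : ℝ) < y := ((uu_spec x n).2).trans hxy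
        exact le_of_lt (by exact_mod_cast h1)
    · rw [le_iSup_iff]
      intro b hb
      apply ereal_le_of_forall_sub
      intro j
      have hb' := hb (Nat.pair m₀ j)
      rw [hv (Nat.pair m₀ j), Nat.unpair_pair, if_pos hm₀] at hb'
      refine le_trans ?_ hb'
      have h2 : y - 1/(Nat.pair m₀ j + 1) ≤ (ww x y (Nat.pair m₀ j) : ℝ) :=
        le_of_lt (lt_of_le_of_lt (le_max_left _ _) (ww_spec x y (Nat.pair m₀ j) hxy).1)
      have h3 : y - 1/(j+1) ≤ y - 1/((Nat.pair m₀ j : ℝ)+1) := by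
        have h4 : (j:ℝ) + 1 ≤ (Nat.pair m₀ j : ℝ) + 1 := by
          have := Nat.right_le_pair m₀ j
          exact_mod_cast Nat.succ_le_succ this
        have h5 : 1/((Nat.pair m₀ j : ℝ)+1) ≤ 1/((j:ℝ)+1) :=
          one_div_le_one_div_of_le (by positivity) h4
        linarith
      exact_mod_cast le_trans h3 h2
  · rw [if_neg h]
    push_neg at h
    apply le_antisymm
    · refine iSup_le fun n => ?_
      rw [hv n, if_neg (h _)]
      exact le_of_lt (by exact_mod_cast (uu_spec x n).2)
    · rw [le_iSup_iff]
      intro b hb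
      apply ereal_le_of_forall_sub
      intro j
      have hb' := hb j
      rw [hv j, if_neg (h _)] at hb'
      refine le_trans ?_ hb'
      exact_mod_cast le_of_lt (uu_spec x j).1

/-! ### The family of names -/

def pathOf : ℕ → ℕ → List ℕ
  | 0, pos => [(Nat.unpair pos).1]
  | k+1, pos => (Nat.unpair (Nat.unpair pos).1).1 :: decL k (Nat.unpair pos).2

def topOf : ℕ → ℕ → ℕ
  | 0, pos => pos
  | _+1, pos => (Nat.unpair pos).1

noncomputable def tfam (x y : ℝ) (d : ℕ) (χ : List ℕ → Prop) (pos : ℕ) : ℚ :=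
  if χ (pathOf d pos) then ww x y (topOf d pos) else uu x (topOf d pos)

theorem tfam_value {x y : ℝ} (hxy : x < y) (d : ℕ) (χ : List ℕ → Prop) :
    AltSupInf d true (fun pos => ((tfam x y d χ pos : ℝ) : EReal))
      = if AltStmt d true χ then (y : EReal) else (x : EReal) := by
  cases d with
  | zero =>
      show (⨆ pos, ((tfam x y 0 χ pos : ℝ) : EReal)) = _
      rw [top_sup hxy (fun m => χ [m]) _ (fun n => ?_)]
      · show (if ∃ m, χ [m] then (y : EReal) else (x : EReal)) = _
        rfl
      · show ((tfam x y 0 χ n : ℝ) : EReal) = _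
        by_cases hc : χ [(Nat.unpair n).1] <;>
          simp [tfam, pathOf, topOf, hc]
  | succ k =>
      show (⨆ n, AltSupInf k false fun m => ((tfam x y (k+1) χ (Nat.pair n m) : ℝ) : EReal)) = _
      have hbr : ∀ n, (AltSupInf k false fun m => ((tfam x y (k+1) χ (Nat.pair n m) : ℝ) : EReal))
          = if AltStmt k false (fun l => χ ((Nat.unpair n).1 :: l)) then ((ww x y n : ℝ) : EReal)
            else ((uu x n : ℝ) : EReal) := by
        intro n
        have hU : ((uu x n : ℝ) : EReal) ≤ ((ww x y n : ℝ) : EReal) := by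
          have h1 : (uu x n : ℝ) < x := (uu_spec x n).2
          have h2 : x < (ww x y n : ℝ) :=
            lt_of_le_of_lt (le_max_right _ _) (ww_spec x y n hxy).1
          exact le_of_lt (by exact_mod_cast h1.trans h2)
        have h3 := altSupInf_twoval hU k false (fun l => χ ((Nat.unpair n).1 :: l))
        rw [← h3]
        congr 1
        funext m
        have h4 : tfam x y (k+1) χ (Nat.pair n m)
            = if χ ((Nat.unpair n).1 :: decL k m) then ww x y n else uu x n := by
          simp [tfam, pathOf, topOf, Nat.unpair_pair]
        rw [h4]
        by_cases hc : χ ((Nat.unpair n).1 :: decL k m) <;> simp [hc]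
      rw [iSup_congr hbr]
      rw [top_sup hxy (fun m => AltStmt k false fun l => χ (m :: l)) _ (fun n => rfl)]
      rfl

end Stmt11Aux
namespace Stmt11Aux

open scoped Classical

local instance : DiscreteTopology ℚ := ⟨rfl⟩

/-! ### Determined predicates on `ℕ → Bool`, coding, continuity -/

def DetP (φ : (ℕ → Bool) → Prop) : Prop :=
  ∃ N, ∀ R R' : ℕ → Bool, (∀ i, i < N → R i = R' i) → (φ R ↔ φ R')

theorem detP_const (p : Prop) : DetP (fun _ => p) := ⟨0, fun _ _ _ => Iff.rfl⟩

theorem detP_and {φ φ' : (ℕ → Bool) → Prop} (h : DetP φ) (h' : DetP φ') :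
    DetP (fun R => φ R ∧ φ' R) := by
  obtain ⟨N, hN⟩ := h; obtain ⟨N', hN'⟩ := h'
  refine ⟨max N N', fun R R' hag => ?_⟩
  exact and_congr (hN R R' fun i hi => hag i (lt_of_lt_of_le hi (le_max_left _ _)))
    (hN' R R' fun i hi => hag i (lt_of_lt_of_le hi (le_max_right _ _)))

theorem detP_imp {φ φ' : (ℕ → Bool) → Prop} (h : DetP φ) (h' : DetP φ') :
    DetP (fun R => φ R → φ' R) := by
  obtain ⟨N, hN⟩ := h; obtain ⟨N', hN'⟩ := h'
  refine ⟨max N N', fun R R' hag => ?_⟩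
  exact imp_congr (hN R R' fun i hi => hag i (lt_of_lt_of_le hi (le_max_left _ _)))
    (hN' R R' fun i hi => hag i (lt_of_lt_of_le hi (le_max_right _ _)))

theorem detP_congr {φ φ' : (ℕ → Bool) → Prop} (h : DetP φ) (h' : ∀ R, φ R ↔ φ' R) :
    DetP φ' := by
  obtain ⟨N, hN⟩ := h
  exact ⟨N, fun R R' hag => (h' R).symm.trans ((hN R R' hag).trans (h' R'))⟩

abbrev CodeT := ℕ × Finset (List Bool)

def CylP (k : ℕ) (R : ℕ → Bool) : Prop :=
  match Encodable.decode (α := CodeT) k with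
  | some c => (List.ofFn (fun i : Fin c.1 => R i)) ∈ c.2
  | none => False

theorem detP_cylP (k : ℕ) : DetP (CylP k) := by
  rcases hdec : Encodable.decode (α := CodeT) k with _ | c
  · refine ⟨0, fun R R' _ => ?_⟩
    simp only [CylP, hdec]
  · refine ⟨c.1, fun R R' hag => ?_⟩
    simp only [CylP, hdec]
    have : (List.ofFn fun i : Fin c.1 => R i) = (List.ofFn fun i : Fin c.1 => R' i) := by
      congr 1
      funext i
      exact hag i i.isLt
    rw [this]

theorem detP_code {φ : (ℕ → Bool) → Prop} (h : DetP φ) : ∃ k, ∀ R, CylP k R ↔ φ R := by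
  obtain ⟨N, hN⟩ := h
  let A : Finset (List Bool) :=
    ((Finset.univ : Finset (Fin N → Bool)).filter
      (fun v => φ (fun i => if h : i < N then v ⟨i, h⟩ else false))).image
      (fun v => List.ofFn v)
  refine ⟨Encodable.encode ((N, A) : CodeT), fun R => ?_⟩
  have hdec : Encodable.decode (α := CodeT) (Encodable.encode ((N, A) : CodeT))
      = some (N, A) := Encodable.encodek _
  simp only [CylP, hdec]
  constructor
  · intro hmem
    simp only [A, Finset.mem_image, Finset.mem_filter] at hmem
    obtain ⟨v, ⟨-, hv⟩, heq⟩ := hmem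
    have hveq : v = fun i : Fin N => R i := List.ofFn_injective heq
    rw [hveq] at hv
    refine (hN _ _ (fun i hi => ?_)).mp hv
    simp [hi]
  · intro hφ
    simp only [A, Finset.mem_image, Finset.mem_filter]
    refine ⟨fun i : Fin N => R i, ⟨Finset.mem_univ _, ?_⟩, rfl⟩
    refine (hN _ _ (fun i hi => ?_)).mpr hφ
    simp [hi]

theorem detP_ite_continuous {φ : (ℕ → Bool) → Prop} (h : DetP φ) (a b : ℚ) :
    Continuous (fun R : ℕ → Bool => if φ R then a else b) := by
  rw [continuous_discrete_rng]
  intro q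
  rw [isOpen_iff_mem_nhds]
  intro R hR
  obtain ⟨N, hN⟩ := h
  have hsub : {R' : ℕ → Bool | ∀ i < N, R' i = R i}
      ⊆ (fun R => if φ R then a else b) ⁻¹' {q} := by
    intro R' hR'
    have hiff : φ R' ↔ φ R := hN R' R hR'
    simp only [Set.mem_preimage, Set.mem_singleton_iff] at hR ⊢
    by_cases hφ : φ R
    · rw [if_pos (hiff.mpr hφ)]; rwa [if_pos hφ] at hR
    · rw [if_neg (fun hh => hφ (hiff.mp hh))]; rwa [if_neg hφ] at hR
  refine Filter.mem_of_superset ?_ hsub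
  have heq : {R' : ℕ → Bool | ∀ i < N, R' i = R i}
      = ⋂ i ∈ Finset.range N, {R' : ℕ → Bool | R' i = R i} := by
    ext R'; simp [Finset.mem_range]
  rw [heq]
  rw [Filter.biInter_finset_mem]
  intro i _
  have hopen : IsOpen {R' : ℕ → Bool | R' i = R i} := by
    have : {R' : ℕ → Bool | R' i = R i} = (fun R' : ℕ → Bool => R' i) ⁻¹' {R i} := rfl
    rw [this]
    exact (isOpen_discrete _).preimage (continuous_apply i)
  exact hopen.mem_nhds rfl

theorem modulus_of_continuous {g : (ℕ → Bool) → ℚ} (hg : Continuous g) :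
    ∃ N, ∀ R R' : ℕ → Bool, (∀ i, i < N → R i = R' i) → g R = g R' := by
  have hopen : ∀ R : ℕ → Bool, IsOpen (g ⁻¹' {g R}) :=
    fun R => (isOpen_discrete _).preimage hg
  have hmem : ∀ R : ℕ → Bool, R ∈ g ⁻¹' {g R} := fun R => rfl
  choose I u hIu hsub using fun R => isOpen_pi_iff.mp (hopen R) R (hmem R)
  obtain ⟨T, hT⟩ := IsCompact.elim_finite_subcover (isCompact_univ (X := ℕ → Bool))
    (fun R => (I R : Set ℕ).pi (u R))
    (fun R => isOpen_set_pi (Finset.finite_toSet _) (fun i hi => (hIu R i hi).1))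
    (fun R _ => Set.mem_iUnion.mpr ⟨R, fun i hi => (hIu R i hi).2⟩)
  refine ⟨(T.sup fun R => (I R).sup id) + 1, fun R R' hagree => ?_⟩
  obtain ⟨R₀, hR₀T, hR₀⟩ := Set.mem_iUnion₂.mp (hT (Set.mem_univ R))
  have hR'mem : R' ∈ (I R₀ : Set ℕ).pi (u R₀) := by
    intro i hi
    have hi' : i ∈ I R₀ := hi
    have hiN : i < (T.sup fun R => (I R).sup id) + 1 := by
      have h1 : i ≤ (I R₀).sup id := Finset.le_sup (f := id) hi'
      have h2 : (I R₀).sup id ≤ T.sup (fun R => (I R).sup id) :=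
        Finset.le_sup (f := fun R => (I R).sup id) hR₀T
      omega
    rw [← hagree i hiN]
    exact hR₀ i hi
  have e1 : g R = g R₀ := hsub R₀ hR₀
  have e2 : g R' = g R₀ := hsub R₀ hR'mem
  rw [e1, e2]

end Stmt11Aux
namespace Stmt11Aux

open scoped Classical

noncomputable def dq : ℕ → ℚ := fun n => (Encodable.decode (α := ℚ) n).getD 0

theorem dq_surj (q : ℚ) : ∃ n, dq n = q :=
  ⟨Encodable.encode q, by simp [dq, Encodable.encodek]⟩

theorem exists_rat_iff {p : ℚ → Prop} : (∃ c' : ℚ, p c') ↔ ∃ n : ℕ, p (dq n) := by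
  constructor
  · rintro ⟨c', h⟩; obtain ⟨n, rfl⟩ := dq_surj c'; exact ⟨n, h⟩
  · rintro ⟨n, h⟩; exact ⟨dq n, h⟩

theorem forall_rat_iff {p : ℚ → Prop} : (∀ c' : ℚ, p c') ↔ ∀ n : ℕ, p (dq n) := by
  constructor
  · intro h n; exact h _
  · intro h c'; obtain ⟨n, rfl⟩ := dq_surj c'; exact h n

/-- The four-fold normal form lemma: strict/nonstrict lower bounds on alternating
sup/inf trees of coordinates of `G` are alternating first-order statements with
determined (clopen) innermost conditions. -/
theorem shape_main (G : (ℕ → Bool) → ℕ → ℚ)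
    (hG : ∀ pos, ∃ N, ∀ R R' : ℕ → Bool, (∀ i, i < N → R i = R' i) → G R pos = G R' pos) :
    ∀ (k : ℕ) (emb : ℕ → ℕ),
      (∀ c : ℚ, ∃ χ : List ℕ → (ℕ → Bool) → Prop, (∀ l, DetP (χ l)) ∧ ∀ R,
        (((c:ℝ):EReal) < AltSupInf k true (fun m => ((G R (emb m) : ℝ):EReal))
          ↔ AltStmt k true (fun l => χ l R)))
      ∧ (∀ c : ℚ, ∃ χ : List ℕ → (ℕ → Bool) → Prop, (∀ l, DetP (χ l)) ∧ ∀ R,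
        (((c:ℝ):EReal) < AltSupInf k false (fun m => ((G R (emb m) : ℝ):EReal))
          ↔ AltStmt (k+1) true (fun l => χ l R)))
      ∧ (∀ c : ℚ, ∃ χ : List ℕ → (ℕ → Bool) → Prop, (∀ l, DetP (χ l)) ∧ ∀ R,
        (((c:ℝ):EReal) ≤ AltSupInf k true (fun m => ((G R (emb m) : ℝ):EReal))
          ↔ AltStmt (k+1) false (fun l => χ l R)))
      ∧ (∀ c : ℚ, ∃ χ : List ℕ → (ℕ → Bool) → Prop, (∀ l, DetP (χ l)) ∧ ∀ R,
        (((c:ℝ):EReal) ≤ AltSupInf k false (fun m => ((G R (emb m) : ℝ):EReal))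
          ↔ AltStmt k false (fun l => χ l R))) := by
  intro k
  induction k with
  | zero =>
      intro emb
      refine ⟨?_, ?_, ?_, ?_⟩
      · intro c
        refine ⟨fun l R => ((c:ℝ):EReal) < ((G R (emb l.headI) : ℝ) : EReal), ?_, fun R => ?_⟩
        · intro l
          obtain ⟨N, hN⟩ := hG (emb l.headI)
          exact ⟨N, fun R R' hag => by simp only [hN R R' hag]⟩
        · have e1 : AltSupInf 0 true (fun m => ((G R (emb m) : ℝ) : EReal))
              = ⨆ m, ((G R (emb m) : ℝ) : EReal) := rfl
          rw [e1]
          exact lt_iSup_iff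
      · intro c
        refine ⟨fun l R => (c < dq l.headI) ∧
            ((dq l.headI : ℝ):EReal) ≤ ((G R (emb l.tail.headI) : ℝ):EReal), ?_, fun R => ?_⟩
        · intro l
          refine detP_and (detP_const _) ?_
          obtain ⟨N, hN⟩ := hG (emb l.tail.headI)
          exact ⟨N, fun R R' hag => by simp only [hN R R' hag]⟩
        · have e1 : AltSupInf 0 false (fun m => ((G R (emb m):ℝ):EReal))
              = ⨅ m, ((G R (emb m):ℝ):EReal) := rfl
          rw [e1, ereal_lt_iInf_iff]
          constructor
          · rintro ⟨c', h1, h2⟩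
            obtain ⟨n, rfl⟩ := dq_surj c'
            exact ⟨n, fun m => ⟨by exact_mod_cast h1, h2 m⟩⟩
          · rintro ⟨n, hn⟩
            exact ⟨dq n, by exact_mod_cast (hn 0).1, fun m => (hn m).2⟩
      · intro c
        refine ⟨fun l R => ((dq l.headI : ℝ) < (c : ℝ) →
            ((dq l.headI : ℝ):EReal) < ((G R (emb l.tail.headI) : ℝ):EReal)), ?_, fun R => ?_⟩
        · intro l
          refine detP_imp (detP_const _) ?_
          obtain ⟨N, hN⟩ := hG (emb l.tail.headI)
          exact ⟨N, fun R R' hag => by simp only [hN R R' hag]⟩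
        · have e1 : AltSupInf 0 true (fun m => ((G R (emb m):ℝ):EReal))
              = ⨆ m, ((G R (emb m):ℝ):EReal) := rfl
          rw [e1, ereal_le_iSup_iff]
          constructor
          · intro h n
            by_cases hc : (dq n : ℝ) < (c:ℝ)
            · obtain ⟨m, hm⟩ := h (dq n) hc
              exact ⟨m, fun _ => hm⟩
            · exact ⟨0, fun hcc => absurd hcc hc⟩
          · intro h c'' hcc
            obtain ⟨n, rfl⟩ := dq_surj c''
            obtain ⟨m, hm⟩ := h n
            exact ⟨m, hm hcc⟩
      · intro c
        refine ⟨fun l R => ((c:ℝ):EReal) ≤ ((G R (emb l.headI):ℝ):EReal), ?_, fun R => ?_⟩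
        · intro l
          obtain ⟨N, hN⟩ := hG (emb l.headI)
          exact ⟨N, fun R R' hag => by simp only [hN R R' hag]⟩
        · have e1 : AltSupInf 0 false (fun m => ((G R (emb m):ℝ):EReal))
              = ⨅ m, ((G R (emb m):ℝ):EReal) := rfl
          rw [e1]
          exact le_iInf_iff
  | succ k ih =>
      intro emb
      refine ⟨?_, ?_, ?_, ?_⟩
      · -- strict, true
        intro c
        choose χf hdet hiff using fun n : ℕ => ((ih (fun m => emb (Nat.pair n m))).2.1) c
        refine ⟨fun l R => χf (Nat.unpair l.headI).1 ((Nat.unpair l.headI).2 :: l.tail) R,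
          fun l => hdet _ _, fun R => ?_⟩
        have e1 : AltSupInf (k+1) true (fun m => ((G R (emb m) : ℝ) : EReal))
            = ⨆ n, AltSupInf k false (fun m => ((G R (emb (Nat.pair n m)) : ℝ) : EReal)) := rfl
        rw [e1, lt_iSup_iff]
        exact (exists_congr fun n => hiff n R).trans (merge_exists (k+1) (fun n l => χf n l R))
      · -- strict, false
        intro c
        choose χf hdet hiff using fun (q : ℚ) (n : ℕ) => ((ih (fun m => emb (Nat.pair n m))).2.2.1) q
        refine ⟨fun l R => (c < dq l.headI) ∧
            χf (dq l.headI) (Nat.unpair l.tail.headI).1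
              ((Nat.unpair l.tail.headI).2 :: l.tail.tail) R, ?_, fun R => ?_⟩
        · intro l
          exact detP_and (detP_const _) (hdet _ _ _)
        · have e1 : AltSupInf (k+1) false (fun m => ((G R (emb m) : ℝ) : EReal))
              = ⨅ n, AltSupInf k true (fun m => ((G R (emb (Nat.pair n m)) : ℝ) : EReal)) := rfl
          rw [e1, ereal_lt_iInf_iff]
          have h2 : ∀ (c' : ℚ), ((c:ℝ) < (c':ℝ) ∧ ∀ n, ((c':ℝ):EReal)
                ≤ AltSupInf k true (fun m => ((G R (emb (Nat.pair n m)):ℝ):EReal)))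
              ↔ ((c < c') ∧ AltStmt (k+1) false (fun l => χf c' (Nat.unpair l.headI).1
                  ((Nat.unpair l.headI).2 :: l.tail) R)) := by
            intro c'
            refine and_congr (by exact_mod_cast Iff.rfl) ?_
            exact (forall_congr' fun n => hiff c' n R).trans
              (merge_forall (k+1) (fun n l => χf c' n l R))
          refine (exists_congr h2).trans ?_
          rw [exists_rat_iff]
          exact (exists_congr fun n₀ => (altStmt_const_and (k+1) false _ _).symm)
      · -- nonstrict, true
        intro c
        choose χf hdet hiff using fun (q : ℚ) (n : ℕ) => ((ih (fun m => emb (Nat.pair n m))).2.1) q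
        refine ⟨fun l R => ((dq l.headI : ℝ) < (c:ℝ) →
            χf (dq l.headI) (Nat.unpair l.tail.headI).1
              ((Nat.unpair l.tail.headI).2 :: l.tail.tail) R), ?_, fun R => ?_⟩
        · intro l
          exact detP_imp (detP_const _) (hdet _ _ _)
        · have e1 : AltSupInf (k+1) true (fun m => ((G R (emb m) : ℝ) : EReal))
              = ⨆ n, AltSupInf k false (fun m => ((G R (emb (Nat.pair n m)) : ℝ) : EReal)) := rfl
          rw [e1, ereal_le_iSup_iff]
          have h2 : ∀ (c'' : ℚ), (((c'':ℝ) < (c:ℝ)) → ∃ n, ((c'':ℝ):EReal)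
                < AltSupInf k false (fun m => ((G R (emb (Nat.pair n m)):ℝ):EReal)))
              ↔ (((c'':ℝ) < (c:ℝ)) → AltStmt (k+1) true (fun l => χf c'' (Nat.unpair l.headI).1
                  ((Nat.unpair l.headI).2 :: l.tail) R)) := by
            intro c''
            refine imp_congr Iff.rfl ?_
            exact (exists_congr fun n => hiff c'' n R).trans
              (merge_exists (k+1) (fun n l => χf c'' n l R))
          refine (forall_congr' h2).trans ?_
          rw [forall_rat_iff]
          exact (forall_congr' fun n₀ => (altStmt_const_imp (k+1) true _ _).symm)
      · -- nonstrict, false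
        intro c
        choose χf hdet hiff using fun n : ℕ => ((ih (fun m => emb (Nat.pair n m))).2.2.1) c
        refine ⟨fun l R => χf (Nat.unpair l.headI).1 ((Nat.unpair l.headI).2 :: l.tail) R,
          fun l => hdet _ _, fun R => ?_⟩
        have e1 : AltSupInf (k+1) false (fun m => ((G R (emb m) : ℝ) : EReal))
            = ⨅ n, AltSupInf k true (fun m => ((G R (emb (Nat.pair n m)) : ℝ) : EReal)) := rfl
        rw [e1, le_iInf_iff]
        exact (forall_congr' fun n => hiff n R).trans (merge_forall (k+1) (fun n l => χf n l R))

end Stmt11Aux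
namespace Stmt11Aux

open scoped Classical

/-! ### The universal statement and its diagonal -/

def RowFirst (Q : ℕ → Bool) (r ℓ : ℕ) : Prop :=
  Q (Nat.pair r ℓ) = true ∧ ∀ ℓ', ℓ' < ℓ → Q (Nat.pair r ℓ') = false

def psi (d : ℕ) (Q R : ℕ → Bool) (l : List ℕ) : Prop :=
  if d % 2 = 0 then
    RowFirst Q (encL (l.dropLast ++ [(Nat.unpair (l.getLast?.getD 0)).1]))
        (Nat.unpair (l.getLast?.getD 0)).2
      ∧ CylP (Nat.unpair (l.getLast?.getD 0)).2 R
  else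
    (RowFirst Q (encL (l.dropLast ++ [(Nat.unpair (l.getLast?.getD 0)).1]))
        (Nat.unpair (l.getLast?.getD 0)).2
      → CylP (Nat.unpair (l.getLast?.getD 0)).2 R)

theorem psi_concat (d : ℕ) (Q Pp : ℕ → Bool) (pre : List ℕ) (n : ℕ) :
    psi d Q Pp (pre ++ [n]) = (if d % 2 = 0 then
      RowFirst Q (encL (pre ++ [(Nat.unpair n).1])) (Nat.unpair n).2
        ∧ CylP (Nat.unpair n).2 Pp
    else (RowFirst Q (encL (pre ++ [(Nat.unpair n).1])) (Nat.unpair n).2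
        → CylP (Nat.unpair n).2 Pp)) := by
  simp [psi, List.getLast?_concat, List.dropLast_concat]

theorem detP_rowFirst (r ℓ : ℕ) : DetP (fun Q => RowFirst Q r ℓ) := by
  refine ⟨(Finset.range (ℓ+1)).sup (fun i => Nat.pair r i) + 1, fun R R' hag => ?_⟩
  have key : ∀ i, i ≤ ℓ → R (Nat.pair r i) = R' (Nat.pair r i) := by
    intro i hi
    apply hag
    have h1 : Nat.pair r i ≤ (Finset.range (ℓ+1)).sup (fun i => Nat.pair r i) :=
      Finset.le_sup (f := fun i => Nat.pair r i) (Finset.mem_range.mpr (Nat.lt_succ_of_le hi))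
    omega
  constructor
  · rintro ⟨h1, h2⟩
    refine ⟨by rw [← key ℓ le_rfl]; exact h1, fun ℓ' hlt => ?_⟩
    rw [← key ℓ' (le_of_lt hlt)]; exact h2 ℓ' hlt
  · rintro ⟨h1, h2⟩
    refine ⟨by rw [key ℓ le_rfl]; exact h1, fun ℓ' hlt => ?_⟩
    rw [key ℓ' (le_of_lt hlt)]; exact h2 ℓ' hlt

theorem detP_psi_diag (d : ℕ) (l : List ℕ) : DetP (fun R => psi d R R l) := by
  by_cases hd : d % 2 = 0
  · have he : (fun R : ℕ → Bool => psi d R R l)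
        = fun R => (RowFirst R (encL (l.dropLast ++ [(Nat.unpair (l.getLast?.getD 0)).1]))
            (Nat.unpair (l.getLast?.getD 0)).2
          ∧ CylP (Nat.unpair (l.getLast?.getD 0)).2 R) := by
      funext R; simp only [psi, if_pos hd]
    rw [he]
    exact detP_and (detP_rowFirst _ _) (detP_cylP _)
  · have he : (fun R : ℕ → Bool => psi d R R l)
        = fun R => (RowFirst R (encL (l.dropLast ++ [(Nat.unpair (l.getLast?.getD 0)).1]))
            (Nat.unpair (l.getLast?.getD 0)).2
          → CylP (Nat.unpair (l.getLast?.getD 0)).2 R) := by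
      funext R; simp only [psi, if_neg hd]
    rw [he]
    exact detP_imp (detP_rowFirst _ _) (detP_cylP _)

theorem univ_gen (d : ℕ) (cd : List ℕ → ℕ) (χW : List ℕ → (ℕ → Bool) → Prop)
    (hcd : ∀ l, l.length = d + 1 → ∀ P, CylP (cd l) P ↔ χW l P) (P : ℕ → Bool) :
    ∀ (k : ℕ) (b : Bool) (pre : List ℕ), pre.length + k = d →
      (b = true ↔ pre.length % 2 = 0) →
      (AltStmt k b (fun l => χW (pre ++ l) P)
        ↔ AltStmt k b (fun l =>
            psi d (fun i => decide ((Nat.unpair i).2 = cd (decL d (Nat.unpair i).1))) P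
              (pre ++ l))) := by
  set Q₀ : ℕ → Bool := fun i => decide ((Nat.unpair i).2 = cd (decL d (Nat.unpair i).1))
    with hQ₀
  have hRF : ∀ (l : List ℕ), l.length = d + 1 → ∀ ℓ : ℕ,
      (RowFirst Q₀ (encL l) ℓ ↔ ℓ = cd l) := by
    intro l hl ℓ
    constructor
    · rintro ⟨h1, -⟩
      have h2 : decide ((Nat.unpair (Nat.pair (encL l) ℓ)).2
          = cd (decL d (Nat.unpair (Nat.pair (encL l) ℓ)).1)) = true := h1
      rw [Nat.unpair_pair] at h2
      have h3 := of_decide_eq_true h2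
      simpa [decL_encL d l hl] using h3
    · rintro rfl
      constructor
      · show decide ((Nat.unpair (Nat.pair (encL l) (cd l))).2
            = cd (decL d (Nat.unpair (Nat.pair (encL l) (cd l))).1)) = true
        rw [Nat.unpair_pair]
        simp [decL_encL d l hl]
      · intro ℓ' hlt
        show decide ((Nat.unpair (Nat.pair (encL l) ℓ')).2
            = cd (decL d (Nat.unpair (Nat.pair (encL l) ℓ')).1)) = false
        rw [Nat.unpair_pair]
        simp only [decL_encL d l hl]
        exact decide_eq_false (by omega)
  intro k
  induction k with
  | zero =>
      intro b pre hlen hpar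
      have hdpre : pre.length = d := by omega
      cases b
      · have hd : ¬ (d % 2 = 0) := by
          intro hdd
          have := hpar.mpr (by rw [hdpre]; exact hdd)
          simp at this
        show (∀ n, χW (pre ++ [n]) P) ↔ (∀ n, psi d Q₀ P (pre ++ [n]))
        constructor
        · intro h j
          rw [psi_concat, if_neg hd]
          intro hrf
          have hlen1 : (pre ++ [(Nat.unpair j).1]).length = d + 1 := by simp [hdpre]
          have h3 := (hRF _ hlen1 _).mp hrf
          rw [h3]
          exact (hcd _ hlen1 P).mpr (h _)
        · intro h n
          have hlen1 : (pre ++ [n]).length = d + 1 := by simp [hdpre]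
          have hj := h (Nat.pair n (cd (pre ++ [n])))
          rw [psi_concat, if_neg hd, Nat.unpair_pair] at hj
          exact (hcd _ hlen1 P).mp (hj ((hRF _ hlen1 _).mpr rfl))
      · have hd : d % 2 = 0 := by rw [← hdpre]; exact hpar.mp rfl
        show (∃ n, χW (pre ++ [n]) P) ↔ (∃ n, psi d Q₀ P (pre ++ [n]))
        constructor
        · rintro ⟨n, hn⟩
          refine ⟨Nat.pair n (cd (pre ++ [n])), ?_⟩
          rw [psi_concat, if_pos hd, Nat.unpair_pair]
          have hlen1 : (pre ++ [n]).length = d + 1 := by simp [hdpre]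
          exact ⟨(hRF _ hlen1 _).mpr rfl, (hcd _ hlen1 P).mpr hn⟩
        · rintro ⟨j, hj⟩
          rw [psi_concat, if_pos hd] at hj
          obtain ⟨h1, h2⟩ := hj
          have hlen1 : (pre ++ [(Nat.unpair j).1]).length = d + 1 := by simp [hdpre]
          have h3 := (hRF _ hlen1 _).mp h1
          exact ⟨(Nat.unpair j).1, (hcd _ hlen1 P).mp (by rw [← h3]; exact h2)⟩
  | succ k ihk =>
      intro b pre hlen hpar
      cases b
      · have hp' : ¬ (pre.length % 2 = 0) := by
          intro hh
          have := hpar.mpr hh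
          simp at this
        show (∀ n, AltStmt k true fun l => χW (pre ++ (n :: l)) P)
          ↔ (∀ n, AltStmt k true fun l => psi d Q₀ P (pre ++ (n :: l)))
        refine forall_congr' fun n => ?_
        have e : ∀ l : List ℕ, pre ++ (n :: l) = (pre ++ [n]) ++ l := by
          intro l; simp
        have h1 := altStmt_congr k true (χ := fun l => χW (pre ++ (n :: l)) P)
          (χ' := fun l => χW ((pre ++ [n]) ++ l) P) (fun l => by simp only [e l])
        have h3 := altStmt_congr k true (χ := fun l => psi d Q₀ P ((pre ++ [n]) ++ l))
          (χ' := fun l => psi d Q₀ P (pre ++ (n :: l))) (fun l => by simp only [e l])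
        have h2 := ihk true (pre ++ [n]) (by simp; omega)
          (by simp [List.length_append]; omega)
        exact h1.trans (h2.trans h3)
      · have hp : pre.length % 2 = 0 := hpar.mp rfl
        show (∃ n, AltStmt k false fun l => χW (pre ++ (n :: l)) P)
          ↔ (∃ n, AltStmt k false fun l => psi d Q₀ P (pre ++ (n :: l)))
        refine exists_congr fun n => ?_
        have e : ∀ l : List ℕ, pre ++ (n :: l) = (pre ++ [n]) ++ l := by
          intro l; simp
        have h1 := altStmt_congr k false (χ := fun l => χW (pre ++ (n :: l)) P)
          (χ' := fun l => χW ((pre ++ [n]) ++ l) P) (fun l => by simp only [e l])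
        have h3 := altStmt_congr k false (χ := fun l => psi d Q₀ P ((pre ++ [n]) ++ l))
          (χ' := fun l => psi d Q₀ P (pre ++ (n :: l))) (fun l => by simp only [e l])
        have h2 := ihk false (pre ++ [n]) (by simp; omega)
          (by simp [List.length_append]; omega)
        exact h1.trans (h2.trans h3)

end Stmt11Aux

/-- For open `X ⊆ ℝ` and `d ≥ 0`: if `f : X → ℝ` is
(ρ_<^{(d)}→ρ_<^{(d)})-continuous, then `f` is monotonically nondecreasing on `X`. -/
theorem stmt11 (X : Set ℝ) (hX : IsOpen X) (d : ℕ) (f : ℝ → ℝ)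
    (h : ∃ F : (ℕ → ℚ) → (ℕ → ℚ),
        ContinuousOn F {p | ∃ x ∈ X, IsRhoLtKName d p x} ∧
        ∀ x ∈ X, ∀ p, IsRhoLtKName d p x → IsRhoLtKName d (F p) (f x)) :
    ∀ x ∈ X, ∀ y ∈ X, x ≤ y → f x ≤ f y := by
  classical
  intro x hx y hy hxy
  by_contra hf
  push_neg at hf
  obtain ⟨F, hFc, hFr⟩ := h
  rcases eq_or_lt_of_le hxy with rfl | hxy'
  · exact absurd hf (lt_irrefl _)
  obtain ⟨c, hc1, hc2⟩ := exists_rat_btwn hf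
  -- the continuous family of names, parameterized by `R : ℕ → Bool`
  set t : (ℕ → Bool) → (ℕ → ℚ) :=
    fun R => Stmt11Aux.tfam x y d (fun l => Stmt11Aux.psi d R R l) with ht
  set U : (ℕ → Bool) → Prop :=
    fun R => Stmt11Aux.AltStmt d true (fun l => Stmt11Aux.psi d R R l) with hU
  have hval : ∀ R, AltSupInf d true (fun pos => ((t R pos : ℝ) : EReal))
      = if U R then (y : EReal) else (x : EReal) := fun R =>
    Stmt11Aux.tfam_value hxy' d _
  have hname : ∀ R, IsRhoLtKName d (t R) (if U R then y else x) := by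
    intro R
    rw [IsRhoLtKName, hval R]
    by_cases hu : U R <;> simp [hu]
  have hzX : ∀ R, (if U R then y else x) ∈ X := by
    intro R; by_cases hu : U R <;> simp [hu, hx, hy]
  have htmem : ∀ R, t R ∈ {p | ∃ x ∈ X, IsRhoLtKName d p x} :=
    fun R => ⟨(if U R then y else x), hzX R, hname R⟩
  have htc : Continuous t := by
    apply continuous_pi
    intro pos
    have he : (fun R => t R pos) = fun R : ℕ → Bool =>
        if Stmt11Aux.psi d R R (Stmt11Aux.pathOf d pos)
        then (Stmt11Aux.ww x y (Stmt11Aux.topOf d pos))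
        else (Stmt11Aux.uu x (Stmt11Aux.topOf d pos)) := rfl
    rw [he]
    exact Stmt11Aux.detP_ite_continuous (Stmt11Aux.detP_psi_diag d _) _ _
  set G : (ℕ → Bool) → ℕ → ℚ := fun R => F (t R) with hG
  have hGc : Continuous G := hFc.comp_continuous htc htmem
  have hGdet : ∀ pos, ∃ N, ∀ R R' : ℕ → Bool,
      (∀ i, i < N → R i = R' i) → G R pos = G R' pos :=
    fun pos => Stmt11Aux.modulus_of_continuous ((continuous_apply pos).comp hGc)
  have key : ∀ R, (((c:ℝ):EReal) < AltSupInf d true (fun m => ((G R m : ℝ):EReal)))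
      ↔ ¬ U R := by
    intro R
    have hnr := hFr (if U R then y else x) (hzX R) (t R) (hname R)
    rw [IsRhoLtKName] at hnr
    rw [← hnr, EReal.coe_lt_coe_iff]
    by_cases hu : U R
    · rw [if_pos hu]
      exact iff_of_false (not_lt_of_gt hc1) (by simp [hu])
    · rw [if_neg hu]
      exact iff_of_true hc2 hu
  obtain ⟨χW, hdet, hiff⟩ := (Stmt11Aux.shape_main G hGdet d id).1 c
  choose cd hcd using fun l => Stmt11Aux.detP_code (hdet l)
  set Q₀ : ℕ → Bool :=
    fun i => decide ((Nat.unpair i).2 = cd (Stmt11Aux.decL d (Nat.unpair i).1)) with hQ₀def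
  have huniv := Stmt11Aux.univ_gen d cd χW (fun l _ P => hcd l P) Q₀ d true []
    (by simp) (by simp)
  -- huniv : AltStmt d true (fun l => χW ([] ++ l) Q₀) ↔ AltStmt d true (fun l => psi d Q₀ Q₀ ([] ++ l))
  have h1 := key Q₀
  have h2 := hiff Q₀
  have h3 : U Q₀ ↔ ¬ U Q₀ := huniv.symm.trans (h2.symm.trans h1)
  exact iff_not_self h3
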